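/- arXiv:2009.02698 — 5 statements merged into one kernel-verified Lean document; each statement's English description precedes it below -/
import Mathlib

section
/- Let τ₁, τ₂ be n×n partial permutation matrices such that the 2n×n matrix ω = (τ₁; τ₂) has rank n. Then there exist partial permutation matrices ξ₁, ξ₂ of size n such that the 2n×n matrix (ξ₁; ξ₂) also has rank n, the 2n×2n block matrix g = [[τ₁, ξ₁], [τ₂, −ξ₂]] is invertible, and ξ₁ᵀτ₁ − ξ₂ᵀτ₂ = 0. -/
/-!
Write a partial permutation matrix as `τ = P D`, with `P` a permutation matrix and `D` the 0/1
diagonal matrix marking the nonzero columns of `τ`. For `(τ₁; τ₂)` to have full column rank, every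
column must be nonzero, i.e. `D₁² + D₂² = D₁ + D₂` is invertible. Take `ξ₁ = P₁ D₂`, `ξ₂ = P₂ D₁`.
As `Pᵀ P = 1` and diagonal matrices commute, `ξ₁ᵀ τ₁ = D₂ D₁ = ξ₂ᵀ τ₂`; the same computation shows
that `gᵀ g` is the invertible diagonal matrix `diag(D₁² + D₂², D₁² + D₂²)`, and that
`(ξ₁; ξ₂)ᵀ (ξ₁; ξ₂) = D₁² + D₂²`, which gives the rank.
-/

open Matrix

def IsPartialPerm {n : ℕ} (τ : Matrix (Fin n) (Fin n) ℂ) : Prop :=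
  (∀ i j, τ i j = 0 ∨ τ i j = 1) ∧
  (∀ i j j', τ i j = 1 → τ i j' = 1 → j = j') ∧
  (∀ i i' j, τ i j = 1 → τ i' j = 1 → i = i')

theorem Equiv.Perm.exists_forall_apply_eq_of_rel {α : Type*} [Fintype α] (r : α → α → Prop)
    (hfun : ∀ i j j', r i j → r i j' → j = j') (hinj : ∀ i i' j, r i j → r i' j → i = i') :
    ∃ σ : Equiv.Perm α, ∀ i j, r i j → σ i = j := by
  classical
  choose! f hf using fun i (h : ∃ j, r i j) => h
  have hmaps : Set.MapsTo f {i | ∃ j, r i j} (Finset.univ : Finset α) := fun _ _ => by simp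
  have hinjOn : Set.InjOn f {i | ∃ j, r i j} := fun i hi i' hi' he =>
    hinj i i' (f i) (hf i hi) (he ▸ hf i' hi')
  obtain ⟨g, hg⟩ := hmaps.exists_equiv_extend_of_card_eq Finset.card_univ.symm hinjOn
  refine ⟨g.trans (Equiv.subtypeUnivEquiv Finset.mem_univ), fun i j hij => ?_⟩
  rw [Equiv.trans_apply, Equiv.subtypeUnivEquiv_apply, hg i ⟨j, hij⟩]
  exact hfun i _ _ (hf i ⟨j, hij⟩) hij

theorem Matrix.rank_eq_card_of_isUnit_mul {m n R : Type*} [Fintype m] [Fintype n]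
    [DecidableEq n] [CommRing R] [StrongRankCondition R] {A : Matrix m n R} {B : Matrix n m R}
    (h : IsUnit (B * A)) : A.rank = Fintype.card n := by
  refine le_antisymm A.rank_le_card_width ?_
  rw [← rank_of_isUnit _ h]
  exact rank_mul_le_right B A

section Orthogonal

variable {m R : Type*} [Fintype m] [DecidableEq m] [CommRing R]

theorem Matrix.transpose_mul_diagonal_mul_mul_diagonal {P : Matrix m m R} (hP : Pᵀ * P = 1)
    (a b : m → R) : (P * diagonal a)ᵀ * (P * diagonal b) = diagonal (a * b) := by
  rw [transpose_mul, diagonal_transpose, mul_assoc, ← mul_assoc Pᵀ, hP, one_mul,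
    diagonal_mul_diagonal]
  rfl

variable {P₁ P₂ : Matrix m m R} (hP₁ : P₁ᵀ * P₁ = 1) (hP₂ : P₂ᵀ * P₂ = 1) {d₁ d₂ : m → R}
  (hd : ∀ j, IsUnit (d₁ j ^ 2 + d₂ j ^ 2))
include hP₁ hP₂

theorem Matrix.transpose_mul_sub_transpose_mul_eq_zero :
    (P₁ * diagonal d₂)ᵀ * (P₁ * diagonal d₁) - (P₂ * diagonal d₁)ᵀ * (P₂ * diagonal d₂) = 0 := by
  rw [transpose_mul_diagonal_mul_mul_diagonal hP₁, transpose_mul_diagonal_mul_mul_diagonal hP₂,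
    mul_comm, sub_self]

include hd

theorem Matrix.isUnit_fromBlocks_mul_diagonal :
    IsUnit (fromBlocks (P₁ * diagonal d₁) (P₁ * diagonal d₂) (P₂ * diagonal d₂)
      (-(P₂ * diagonal d₁))) := by
  set g := fromBlocks (P₁ * diagonal d₁) (P₁ * diagonal d₂) (P₂ * diagonal d₂)
      (-(P₂ * diagonal d₁))
  have hgram : gᵀ * g = diagonal (Sum.elim (d₁ ^ 2 + d₂ ^ 2) (d₁ ^ 2 + d₂ ^ 2)) := by
    rw [fromBlocks_transpose, fromBlocks_multiply, ← fromBlocks_diagonal]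
    simp only [transpose_neg, neg_mul, mul_neg, neg_neg,
      transpose_mul_diagonal_mul_mul_diagonal hP₁, transpose_mul_diagonal_mul_mul_diagonal hP₂]
    congr 1 <;> simp [diagonal_add, sq, mul_comm, add_comm]
  refine isUnit_of_mul_isUnit_right (x := gᵀ) ?_
  rw [hgram, isUnit_diagonal, Pi.isUnit_iff]
  rintro (j | j) <;> exact hd j

theorem Matrix.rank_fromRows_mul_diagonal [Nontrivial R] :
    (fromRows (P₁ * diagonal d₂) (P₂ * diagonal d₁)).rank = Fintype.card m := by
  refine rank_eq_card_of_isUnit_mul (B := (fromRows (P₁ * diagonal d₂) (P₂ * diagonal d₁))ᵀ) ?_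
  rw [transpose_fromRows, fromCols_mul_fromRows, transpose_mul_diagonal_mul_mul_diagonal hP₁,
    transpose_mul_diagonal_mul_mul_diagonal hP₂, diagonal_add, isUnit_diagonal, Pi.isUnit_iff]
  intro j
  simpa [sq, add_comm] using hd j

end Orthogonal

theorem Matrix.permMatrix_mul_diagonal_apply {m R : Type*} [Fintype m] [DecidableEq m]
    [NonAssocSemiring R] (σ : Equiv.Perm m) (s : Finset m) (i j : m) :
    (σ.permMatrix R * diagonal (fun k => if k ∈ s then 1 else 0) : Matrix m m R) i j =
      if σ i = j ∧ j ∈ s then 1 else 0 := by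
  simp only [mul_diagonal, Equiv.Perm.permMatrix, PEquiv.toMatrix_apply, Equiv.toPEquiv_apply,
    Option.mem_some_iff, ite_and, ite_mul, one_mul, zero_mul]

theorem Matrix.transpose_permMatrix_mul_self {m R : Type*} [Fintype m] [DecidableEq m]
    [NonAssocSemiring R] (σ : Equiv.Perm m) : (σ.permMatrix R)ᵀ * σ.permMatrix R = 1 := by
  rw [transpose_permMatrix, ← permMatrix_mul, mul_inv_cancel, permMatrix_one]

theorem Matrix.exists_ne_zero_of_rank_eq_card {m n K : Type*} [Fintype m] [Fintype n] [Field K]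
    {A : Matrix m n K} (hA : A.rank = Fintype.card n) (j : n) : ∃ i, A i j ≠ 0 := by
  classical
  by_contra! hj
  have hsupp : Function.support Aᵀ.row ⊆ (Finset.univ.erase j : Finset n) := by
    intro k hk
    simp only [Finset.coe_erase, Finset.coe_univ, Set.mem_sdiff, Set.mem_univ,
      Set.mem_singleton_iff, true_and]
    rintro rfl
    exact hk (funext hj)
  have := rank_le_card_of_support_subset Aᵀ _ hsupp
  rw [rank_transpose, hA, Finset.card_erase_of_mem (Finset.mem_univ j), Finset.card_univ] at this
  have : 0 < Fintype.card n := Fintype.card_pos_iff.mpr ⟨j⟩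
  omega

theorem isPartialPerm_permMatrix_mul_diagonal {n : ℕ} (σ : Equiv.Perm (Fin n))
    (s : Finset (Fin n)) :
    IsPartialPerm (σ.permMatrix ℂ * diagonal fun j => if j ∈ s then 1 else 0) := by
  have hone : ∀ i j,
      (σ.permMatrix ℂ * diagonal (fun j => if j ∈ s then 1 else 0) : Matrix _ _ ℂ) i j = 1 →
      σ i = j := fun i j h => by
    rw [permMatrix_mul_diagonal_apply] at h
    split_ifs at h with hc
    exacts [hc.1, absurd h zero_ne_one]
  refine ⟨fun i j => ?_, fun i j j' hj hj' => ?_, fun i i' j hi hi' => ?_⟩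
  · rw [permMatrix_mul_diagonal_apply]
    split_ifs <;> simp
  · exact (hone i j hj).symm.trans (hone i j' hj')
  · exact σ.injective ((hone i j hi).trans (hone i' j hi').symm)

theorem IsPartialPerm.exists_eq_permMatrix_mul_diagonal {n : ℕ} {τ : Matrix (Fin n) (Fin n) ℂ}
    (h : IsPartialPerm τ) : ∃ (σ : Equiv.Perm (Fin n)) (s : Finset (Fin n)),
      τ = σ.permMatrix ℂ * diagonal fun j => if j ∈ s then 1 else 0 := by
  obtain ⟨h01, hrow, hcol⟩ := h
  obtain ⟨σ, hσ⟩ := Equiv.Perm.exists_forall_apply_eq_of_rel (fun i j => τ i j = 1) hrow hcol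
  classical
  refine ⟨σ, Finset.univ.filter fun j => ∃ i, τ i j = 1, ?_⟩
  ext i j
  rw [permMatrix_mul_diagonal_apply]
  rcases h01 i j with h0 | h1
  · rw [h0, if_neg]
    rintro ⟨rfl, hmem⟩
    obtain ⟨i', hi'⟩ := (Finset.mem_filter.mp hmem).2
    obtain rfl := σ.injective (hσ i' _ hi')
    exact zero_ne_one (h0.symm.trans hi')
  · rw [h1, if_pos ⟨hσ i j h1, Finset.mem_filter.mpr ⟨Finset.mem_univ j, i, h1⟩⟩]

theorem exists_complementary_partial_perms {n : ℕ}
    (τ₁ τ₂ : Matrix (Fin n) (Fin n) ℂ)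
    (h₁ : IsPartialPerm τ₁) (h₂ : IsPartialPerm τ₂)
    (hrank : (Matrix.fromRows τ₁ τ₂).rank = n) :
    ∃ ξ₁ ξ₂ : Matrix (Fin n) (Fin n) ℂ,
      IsPartialPerm ξ₁ ∧ IsPartialPerm ξ₂ ∧
      (Matrix.fromRows ξ₁ ξ₂).rank = n ∧
      IsUnit (Matrix.fromBlocks τ₁ ξ₁ τ₂ (-ξ₂)) ∧
      ξ₁ᵀ * τ₁ - ξ₂ᵀ * τ₂ = 0 := by
  obtain ⟨σ₁, s₁, rfl⟩ := h₁.exists_eq_permMatrix_mul_diagonal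
  obtain ⟨σ₂, s₂, rfl⟩ := h₂.exists_eq_permMatrix_mul_diagonal
  have hcover : ∀ j, j ∈ s₁ ∨ j ∈ s₂ := by
    intro j
    obtain ⟨i | i, hi⟩ := exists_ne_zero_of_rank_eq_card (hrank.trans (Fintype.card_fin n).symm) j
    all_goals
      simp only [fromRows_apply_inl, fromRows_apply_inr, permMatrix_mul_diagonal_apply] at hi
      by_contra! h
      simp [h] at hi
  have hunit : ∀ j, IsUnit ((if j ∈ s₁ then (1 : ℂ) else 0) ^ 2 +
      (if j ∈ s₂ then (1 : ℂ) else 0) ^ 2) := by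
    intro j
    rw [isUnit_iff_ne_zero]
    rcases hcover j with h | h <;> simp only [h, if_true] <;> split_ifs <;> norm_num
  have hP₁ := transpose_permMatrix_mul_self (R := ℂ) σ₁
  have hP₂ := transpose_permMatrix_mul_self (R := ℂ) σ₂
  exact ⟨_, _, isPartialPerm_permMatrix_mul_diagonal σ₁ s₂,
    isPartialPerm_permMatrix_mul_diagonal σ₂ s₁,
    (rank_fromRows_mul_diagonal hP₁ hP₂ hunit).trans (Fintype.card_fin n),
    isUnit_fromBlocks_mul_diagonal hP₁ hP₂ hunit, transpose_mul_sub_transpose_mul_eq_zero hP₁ hP₂⟩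
end

section
/- Let g be an invertible complex matrix. Then there exists a polynomial f(T) ∈ ℂ[T] such that f(g)² = g; in particular every invertible complex matrix has a square root that is a polynomial in the matrix. -/
/-! By Cayley–Hamilton it suffices to find `f` with `χ ∣ f ^ 2 - X` for the characteristic
polynomial `χ` of `g`, which splits with nonzero roots. Such an `f` is built one linear factor at a
time: if `f ^ 2 - X = h * q`, then `f + c * q` works for `(X - μ) * q` as soon as
`q(μ) c² + 2 f(μ) c + h(μ) = 0`, and this equation is solvable because `q(μ) = 0` forces
`f(μ)² = μ ≠ 0`. -/

open Matrix Polynomial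

variable {K : Type*} [Field K] [IsAlgClosed K] [NeZero (2 : K)]

theorem exists_quadratic_eq_zero_of_isAlgClosed {a b : K} (c : K) (hab : a ≠ 0 ∨ b ≠ 0) :
    ∃ z, a * (z * z) + b * z + c = 0 := by
  rcases eq_or_ne a 0 with rfl | ha
  · have hb : b ≠ 0 := hab.resolve_left (not_not.2 rfl)
    exact ⟨-c / b, by field_simp; ring⟩
  · obtain ⟨s, hs⟩ := IsAlgClosed.exists_eq_mul_self (discrim a b c)
    exact exists_quadratic_eq_zero ha ⟨s, hs⟩

theorem exists_X_sub_C_mul_dvd_sq_sub_X {q f : K[X]} (hf : q ∣ f ^ 2 - X) {μ : K} (hμ : μ ≠ 0) :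
    ∃ f' : K[X], (X - C μ) * q ∣ f' ^ 2 - X := by
  obtain ⟨h, hh⟩ := hf
  have hcoeff : q.eval μ ≠ 0 ∨ 2 * f.eval μ ≠ 0 := by
    by_contra! hzero
    have hroot := congr_arg (eval μ) hh
    simp only [eval_sub, eval_pow, eval_X, eval_mul, hzero.1, zero_mul] at hroot
    have hfμ : f.eval μ = 0 := (mul_eq_zero.1 hzero.2).resolve_left two_ne_zero
    exact hμ (by simpa [hfμ] using hroot)
  obtain ⟨c, hc⟩ := exists_quadratic_eq_zero_of_isAlgClosed (h.eval μ) hcoeff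
  refine ⟨f + C c * q, ?_⟩
  have hexpand : (f + C c * q) ^ 2 - X = (h + 2 * C c * f + C c ^ 2 * q) * q := by
    linear_combination hh
  rw [hexpand]
  refine mul_dvd_mul_right (dvd_iff_isRoot.2 ?_) q
  simp only [IsRoot, eval_add, eval_mul, eval_pow, eval_C, eval_ofNat]
  linear_combination hc

theorem exists_prod_X_sub_C_dvd_sq_sub_X (s : Multiset K) (hs : (0 : K) ∉ s) :
    ∃ f : K[X], (s.map fun μ => X - C μ).prod ∣ f ^ 2 - X := by
  induction s using Multiset.induction_on with
  | empty => exact ⟨0, by simp⟩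
  | cons μ s ih =>
    obtain ⟨f, hf⟩ := ih fun h => hs (Multiset.mem_cons_of_mem h)
    rw [Multiset.map_cons, Multiset.prod_cons]
    exact exists_X_sub_C_mul_dvd_sq_sub_X hf fun h => hs (h ▸ Multiset.mem_cons_self _ _)

theorem exists_dvd_sq_sub_X_of_eval_zero_ne_zero {p : K[X]} (hp : p.eval 0 ≠ 0) :
    ∃ f : K[X], p ∣ f ^ 2 - X := by
  have hp0 : p ≠ 0 := fun h => hp (by simp [h])
  obtain ⟨f, hf⟩ := exists_prod_X_sub_C_dvd_sq_sub_X p.roots fun h => hp (mem_roots'.1 h).2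
  refine ⟨f, ?_⟩
  rwa [← C_leadingCoeff_mul_prod_multiset_X_sub_C (IsAlgClosed.card_roots_eq_natDegree (p := p)),
    (isUnit_C.2 (leadingCoeff_ne_zero.2 hp0).isUnit).mul_left_dvd]

theorem exists_polynomial_square_root {m : ℕ}
    (g : Matrix (Fin m) (Fin m) ℂ) (hg : IsUnit g) :
    ∃ f : Polynomial ℂ, (Polynomial.aeval g f) ^ 2 = g := by
  have hdet : g.det ≠ 0 := ((isUnit_iff_isUnit_det g).1 hg).ne_zero
  have hχ : g.charpoly.eval 0 ≠ 0 := by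
    rw [← coeff_zero_eq_eval_zero]
    intro h
    exact hdet (by rw [det_eq_sign_charpoly_coeff, h, mul_zero])
  obtain ⟨f, r, hr⟩ := exists_dvd_sq_sub_X_of_eval_zero_ne_zero hχ
  refine ⟨f, sub_eq_zero.1 ?_⟩
  simpa [aeval_self_charpoly] using congr_arg (aeval g) hr
end

section
/- Let σ(g) = Jₙ⁻¹(gᵀ)⁻¹Jₙ on GL₂ₙ(ℂ) and let P be the stabilizer in GL₂ₙ(ℂ) of the subspace V⁺ = span(e₁,…,eₙ) ⊂ ℂ²ⁿ. Then P is σ-stable, and for every h ∈ P with σ(h) = h⁻¹ there exists f ∈ P with σ(f) = f⁻¹ and f² = h. -/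
/-!
Write `τ(A) = J⁻¹ Aᵀ J`, so that `σ(g) = τ(g)⁻¹`. Conjugating by `J` swaps the diagonal blocks,
so `τ` undoes the effect of the transpose on block upper-triangular matrices; with inverses
preserving block-triangularity this makes `P` `σ`-stable, and `σ(h) = h⁻¹` means `τ(h) = h`.

The square root of `h` is a polynomial in `h`: as `h` is invertible, `X` is a unit modulo the
characteristic polynomial `χ` of `h`, and it has a square root modulo every `(X - s²)ᵏ` (Newton's
iteration from `s`), hence modulo `χ` by the Chinese remainder theorem; Cayley–Hamilton then gives
`p(h)² = h`. Being a polynomial in `h`, `f = p(h)` is block upper-triangular and `τ(f) = p(τ(h)) = f`.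
-/

open Matrix

def Jmat (n : ℕ) : Matrix (Fin n ⊕ Fin n) (Fin n ⊕ Fin n) ℂ :=
  Matrix.fromBlocks 0 (-1) 1 0

noncomputable def sigmaMap (n : ℕ) (g : Matrix (Fin n ⊕ Fin n) (Fin n ⊕ Fin n) ℂ) :
    Matrix (Fin n ⊕ Fin n) (Fin n ⊕ Fin n) ℂ :=
  (Jmat n)⁻¹ * (gᵀ)⁻¹ * Jmat n

/-- `g` stabilizes `V⁺ = span(e₁,…,eₙ)`, the subspace of vectors supported on the
first `n` coordinates. -/
def StabVplus (n : ℕ) (g : Matrix (Fin n ⊕ Fin n) (Fin n ⊕ Fin n) ℂ) : Prop :=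
  ∀ v : (Fin n ⊕ Fin n) → ℂ, (∀ j, v (Sum.inr j) = 0) →
    ∀ j, (g.mulVec v) (Sum.inr j) = 0

open Polynomial

theorem sq_sub_dvd_of_dvd_sub {R : Type*} [CommRing R] {a p q x : R} (hpq : a ∣ p - q)
    (hq : a ∣ q ^ 2 - x) : a ∣ p ^ 2 - x := by
  have hsq : a ∣ p ^ 2 - q ^ 2 := hpq.trans (sub_dvd_pow_sub_pow p q 2)
  simpa using dvd_add hsq hq

theorem IsCoprime.exists_sq_sub_dvd_mul {R : Type*} [CommRing R] {a b p₁ p₂ x : R}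
    (hab : IsCoprime a b) (h₁ : a ∣ p₁ ^ 2 - x) (h₂ : b ∣ p₂ ^ 2 - x) :
    ∃ p, a * b ∣ p ^ 2 - x := by
  obtain ⟨u, v, huv⟩ := id hab
  refine ⟨p₁ * (v * b) + p₂ * (u * a), hab.mul_dvd ?_ ?_⟩
  · refine sq_sub_dvd_of_dvd_sub ⟨(p₂ - p₁) * u, ?_⟩ h₁
    linear_combination p₁ * huv
  · refine sq_sub_dvd_of_dvd_sub ⟨(p₁ - p₂) * v, ?_⟩ h₂
    linear_combination p₂ * huv

theorem exists_sq_sub_X_dvd_X_sub_C_pow {K : Type*} [Field K] [NeZero (2 : K)] {s : K}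
    (hs : s ≠ 0) (k : ℕ) :
    ∃ p : K[X], p.eval (s ^ 2) = s ∧ (X - C (s ^ 2)) ^ (k + 1) ∣ p ^ 2 - X := by
  induction k with
  | zero => exact ⟨C s, eval_C, ⟨-1, by simp [C_pow]⟩⟩
  | succ k ih =>
    obtain ⟨p, hp, q, hq⟩ := ih
    set c := q.eval (s ^ 2) / (2 * s)
    refine ⟨p - C c * (X - C (s ^ 2)) ^ (k + 1), by simp [hp], ?_⟩
    have hroot : X - C (s ^ 2) ∣ q - 2 * C c * p := by
      rw [dvd_iff_isRoot, IsRoot, eval_sub, eval_mul, eval_mul, hp, eval_C, eval_ofNat]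
      have hc : c * (2 * s) = q.eval (s ^ 2) := div_mul_cancel₀ _ (mul_ne_zero two_ne_zero hs)
      linear_combination -hc
    obtain ⟨r, hr⟩ := hroot
    refine ⟨r + C c ^ 2 * (X - C (s ^ 2)) ^ k, ?_⟩
    linear_combination hq + (X - C (s ^ 2)) ^ (k + 1) * hr

theorem exists_sq_sub_X_dvd_prime_pow {K : Type*} [Field K] [IsAlgClosed K] [NeZero (2 : K)]
    {q : K[X]} (hq : Prime q) (h0 : q.eval 0 ≠ 0) (k : ℕ) : ∃ p : K[X], q ^ k ∣ p ^ 2 - X := by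
  obtain ⟨a, ha⟩ := IsAlgClosed.exists_root q (degree_pos_of_irreducible hq.irreducible).ne'
  obtain ⟨s, rfl⟩ := IsAlgClosed.exists_pow_nat_eq a two_pos
  have hs : s ≠ 0 := by
    rintro rfl
    exact h0 (by simpa using ha)
  have hassoc : Associated (X - C (s ^ 2)) q :=
    (irreducible_X_sub_C _).associated_of_dvd hq.irreducible (dvd_iff_isRoot.mpr ha)
  obtain ⟨p, -, hp⟩ := exists_sq_sub_X_dvd_X_sub_C_pow hs k
  exact ⟨p, (hassoc.pow_pow (n := k)).dvd_iff_dvd_left.mp ((pow_dvd_pow _ k.le_succ).trans hp)⟩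

theorem exists_sq_sub_X_dvd {K : Type*} [Field K] [IsAlgClosed K] [NeZero (2 : K)]
    (m : K[X]) (h0 : m.eval 0 ≠ 0) : ∃ p : K[X], m ∣ p ^ 2 - X := by
  induction m using UniqueFactorizationMonoid.induction_on_coprime with
  | h0 => simp at h0
  | h1 hu => exact ⟨0, hu.dvd⟩
  | hpr k hq =>
    rcases k.eq_zero_or_pos with rfl | hk
    · exact ⟨0, by simp⟩
    exact exists_sq_sub_X_dvd_prime_pow hq (by simpa [hk.ne'] using h0) k
  | hcp hxy hx hy =>
    rw [eval_mul] at h0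
    obtain ⟨p₁, h₁⟩ := hx (left_ne_zero_of_mul h0)
    obtain ⟨p₂, h₂⟩ := hy (right_ne_zero_of_mul h0)
    exact hxy.isCoprime.exists_sq_sub_dvd_mul h₁ h₂

theorem Matrix.exists_aeval_sq_eq_of_isUnit {K ι : Type*} [Field K] [IsAlgClosed K]
    [NeZero (2 : K)] [Fintype ι] [DecidableEq ι] {h : Matrix ι ι K} (hh : IsUnit h) :
    ∃ p : K[X], aeval h p ^ 2 = h := by
  have h0 : h.charpoly.eval 0 ≠ 0 := by
    intro hc
    have hdet := det_eq_sign_charpoly_coeff h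
    rw [coeff_zero_eq_eval_zero, hc, mul_zero] at hdet
    exact ((isUnit_iff_isUnit_det h).mp hh).ne_zero hdet
  obtain ⟨p, hp⟩ := exists_sq_sub_X_dvd h.charpoly h0
  have hzero := aeval_eq_zero_of_dvd_aeval_eq_zero hp (aeval_self_charpoly h)
  rw [map_sub, map_pow, aeval_X, sub_eq_zero] at hzero
  exact ⟨p, hzero⟩

theorem Polynomial.aeval_transpose {R α ι : Type*} [CommSemiring R] [CommSemiring α]
    [Algebra R α] [Fintype ι] [DecidableEq ι] (A : Matrix ι ι α) (p : R[X]) :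
    aeval Aᵀ p = (aeval A p)ᵀ := by
  apply MulOpposite.op_injective
  simpa [aeval_op_apply] using aeval_algHom_apply (transposeAlgEquiv ι R α) A p

theorem Polynomial.aeval_units_inv_mul_mul {R A : Type*} [CommSemiring R] [Semiring A]
    [Algebra R A] (u : Aˣ) (x : A) (p : R[X]) :
    aeval (↑u⁻¹ * x * u) p = ↑u⁻¹ * aeval x p * u := by
  induction p using Polynomial.induction_on' with
  | add p q hp hq => simp [hp, hq, mul_add, add_mul]
  | monomial k c =>
    rw [aeval_monomial, aeval_monomial, Units.conj_pow', ← Algebra.smul_def, ← Algebra.smul_def,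
      mul_smul_comm, smul_mul_assoc]

theorem Matrix.BlockTriangular.nonsing_inv {m α R : Type*} [Fintype m] [DecidableEq m]
    [LinearOrder α] [CommRing R] {M : Matrix m m R} {b : m → α} (hM : M.BlockTriangular b) :
    M⁻¹.BlockTriangular b := by
  by_cases h : IsUnit M.det
  · have := M.invertibleOfIsUnitDet h
    exact blockTriangular_inv_of_blockTriangular hM
  · rw [nonsing_inv_apply_not_isUnit M h]
    exact blockTriangular_zero

theorem Matrix.BlockTriangular.aeval {m α R : Type*} [Fintype m] [DecidableEq m]
    [LinearOrder α] [CommRing R] {M : Matrix m m R} {b : m → α} (hM : M.BlockTriangular b)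
    (p : R[X]) : (aeval M p).BlockTriangular b := by
  have hmem := (Polynomial.aeval (⟨M, hM⟩ : blockTriangularSubalgebra R R b) p).prop
  rwa [aeval_subalgebra_coe] at hmem

theorem Matrix.blockTriangular_isRight_iff {m n R : Type*} [Zero R]
    (M : Matrix (m ⊕ n) (m ⊕ n) R) : M.BlockTriangular Sum.isRight ↔ M.toBlocks₂₁ = 0 := by
  constructor
  · intro hM
    ext i j
    exact hM (by simp)
  · rintro hM (i | i) (j | j) hij
    · exact absurd hij (lt_irrefl _)
    · exact ((by decide : ¬ true < false) hij).elim
    · exact congrFun₂ hM i j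
    · exact absurd hij (lt_irrefl _)

section Symplectic

variable {n : ℕ}

theorem Jmat_mul_Jmat : Jmat n * Jmat n = -1 := by
  simp [Jmat, fromBlocks_multiply, ← fromBlocks_one, fromBlocks_neg]

theorem inv_Jmat : (Jmat n)⁻¹ = -Jmat n :=
  inv_eq_right_inv (by rw [mul_neg, Jmat_mul_Jmat, neg_neg])

theorem isUnit_Jmat : IsUnit (Jmat n) :=
  ⟨⟨Jmat n, -Jmat n, by simp [Jmat_mul_Jmat], by simp [Jmat_mul_Jmat]⟩, rfl⟩

noncomputable def symplecticAdjoint (n : ℕ) (A : Matrix (Fin n ⊕ Fin n) (Fin n ⊕ Fin n) ℂ) :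
    Matrix (Fin n ⊕ Fin n) (Fin n ⊕ Fin n) ℂ :=
  (Jmat n)⁻¹ * Aᵀ * Jmat n

theorem sigmaMap_eq_inv_symplecticAdjoint (g : Matrix (Fin n ⊕ Fin n) (Fin n ⊕ Fin n) ℂ) :
    sigmaMap n g = (symplecticAdjoint n g)⁻¹ := by
  simp only [sigmaMap, symplecticAdjoint, Matrix.mul_inv_rev,
    nonsing_inv_nonsing_inv _ ((isUnit_iff_isUnit_det _).mp isUnit_Jmat), Matrix.mul_assoc]

theorem isUnit_symplecticAdjoint_iff {g : Matrix (Fin n ⊕ Fin n) (Fin n ⊕ Fin n) ℂ} :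
    IsUnit (symplecticAdjoint n g) ↔ IsUnit g := by
  rw [isUnit_iff_isUnit_det, isUnit_iff_isUnit_det g, symplecticAdjoint, det_conj' isUnit_Jmat,
    det_transpose]

theorem symplecticAdjoint_fromBlocks (A B C D : Matrix (Fin n) (Fin n) ℂ) :
    symplecticAdjoint n (fromBlocks A B C D) = fromBlocks Dᵀ (-Bᵀ) (-Cᵀ) Aᵀ := by
  rw [symplecticAdjoint, inv_Jmat, Jmat, fromBlocks_transpose, fromBlocks_neg, fromBlocks_multiply,
    fromBlocks_multiply]
  simp

theorem toBlocks₂₁_symplecticAdjoint (A : Matrix (Fin n ⊕ Fin n) (Fin n ⊕ Fin n) ℂ) :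
    (symplecticAdjoint n A).toBlocks₂₁ = -A.toBlocks₂₁ᵀ := by
  conv_lhs => rw [← fromBlocks_toBlocks A, symplecticAdjoint_fromBlocks]
  rfl

theorem Matrix.BlockTriangular.symplecticAdjoint {A : Matrix (Fin n ⊕ Fin n) (Fin n ⊕ Fin n) ℂ}
    (hA : A.BlockTriangular Sum.isRight) : (symplecticAdjoint n A).BlockTriangular Sum.isRight := by
  rw [blockTriangular_isRight_iff] at hA ⊢
  rw [toBlocks₂₁_symplecticAdjoint, hA, transpose_zero, neg_zero]

theorem aeval_symplecticAdjoint (A : Matrix (Fin n ⊕ Fin n) (Fin n ⊕ Fin n) ℂ) (p : ℂ[X]) :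
    aeval (symplecticAdjoint n A) p = symplecticAdjoint n (aeval A p) := by
  rw [symplecticAdjoint, symplecticAdjoint, ← isUnit_Jmat.unit_spec, ← coe_units_inv,
    aeval_units_inv_mul_mul, aeval_transpose]

theorem stabVplus_iff_blockTriangular {g : Matrix (Fin n ⊕ Fin n) (Fin n ⊕ Fin n) ℂ} :
    StabVplus n g ↔ g.BlockTriangular Sum.isRight := by
  rw [blockTriangular_isRight_iff]
  constructor
  · intro hg
    ext i j
    simpa [mulVec_single_one, toBlocks₂₁] using hg (Pi.single (Sum.inl j) 1) (by simp) i
  · intro hg v hv i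
    have hg' : ∀ j, g (Sum.inr i) (Sum.inl j) = 0 := fun j => congrFun₂ hg i j
    simp [mulVec, dotProduct, Fintype.sum_sum_type, hv, hg']

end Symplectic

theorem siegel_parabolic_sigma_stable_and_square_roots (n : ℕ) :
    (∀ g : Matrix (Fin n ⊕ Fin n) (Fin n ⊕ Fin n) ℂ,
        IsUnit g → StabVplus n g → IsUnit (sigmaMap n g) ∧ StabVplus n (sigmaMap n g)) ∧
    (∀ h : Matrix (Fin n ⊕ Fin n) (Fin n ⊕ Fin n) ℂ,
        IsUnit h → StabVplus n h → sigmaMap n h = h⁻¹ →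
        ∃ f : Matrix (Fin n ⊕ Fin n) (Fin n ⊕ Fin n) ℂ,
          IsUnit f ∧ StabVplus n f ∧ sigmaMap n f = f⁻¹ ∧ f * f = h) := by
  simp only [stabVplus_iff_blockTriangular, sigmaMap_eq_inv_symplecticAdjoint]
  refine ⟨fun g hg hgP => ?_, fun h hh hhP hσ => ?_⟩
  · exact ⟨isUnit_nonsing_inv_iff.mpr (isUnit_symplecticAdjoint_iff.mpr hg),
      hgP.symplecticAdjoint.nonsing_inv⟩
  · have hτ : symplecticAdjoint n h = h :=
      inv_inj hσ ((isUnit_iff_isUnit_det _).mp (isUnit_symplecticAdjoint_iff.mpr hh))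
    obtain ⟨p, hp⟩ := exists_aeval_sq_eq_of_isUnit hh
    refine ⟨aeval h p, (isUnit_pow_iff two_ne_zero).mp (by rwa [hp]), hhP.aeval p, ?_,
      by rw [← sq, hp]⟩
    rw [← aeval_symplecticAdjoint, hτ]
end

section
/- Let G be a group with an automorphism σ of order dividing 2, and let H ≤ G be a σ-stable subgroup such that for every h ∈ H with σ(h)=h⁻¹ there exists f ∈ H with σ(f)=f⁻¹ and f² = h. If g ∈ G satisfies g⁻¹σ(g) ∈ H, then there exists f ∈ H with σ(gf) = gf; in particular the coset gH contains a σ-fixed element. -/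
/-! The element `g⁻¹ σ(g)` is inverted by the involution `σ`, so it has a square root `f ∈ H`
inverted by `σ`; then `σ(g f) = g f² f⁻¹ = g f`. -/

section Involution

variable {G : Type*} [Group G] (σ : G →* G)

theorem map_inv_mul_map_eq_inv (hσ : ∀ g, σ (σ g) = g) (g : G) :
    σ (g⁻¹ * σ g) = (g⁻¹ * σ g)⁻¹ := by
  rw [map_mul, map_inv, hσ, mul_inv_rev, inv_inv]

theorem map_mul_eq_self_of_sq_eq_inv_mul_map {g f : G} (hf : σ f = f⁻¹)
    (hsq : f ^ 2 = g⁻¹ * σ g) : σ (g * f) = g * f := by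
  have hσg : σ g = g * f ^ 2 := by rw [hsq, mul_inv_cancel_left]
  rw [map_mul, hf, hσg, pow_two, mul_assoc, mul_inv_cancel_right]

end Involution

theorem coset_contains_sigma_fixed_element_general {G : Type*} [Group G]
    (σ : G →* G) (hσ : ∀ g, σ (σ g) = g)
    (H : Subgroup G)
    (hsqrt : ∀ h ∈ H, σ h = h⁻¹ → ∃ f ∈ H, σ f = f⁻¹ ∧ f ^ 2 = h)
    (g : G) (hg : g⁻¹ * σ g ∈ H) :
    ∃ f ∈ H, σ (g * f) = g * f := by
  obtain ⟨f, hfH, hf, hsq⟩ := hsqrt _ hg (map_inv_mul_map_eq_inv σ hσ g)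
  exact ⟨f, hfH, map_mul_eq_self_of_sq_eq_inv_mul_map σ hf hsq⟩

theorem coset_contains_sigma_fixed_element {G : Type*} [Group G]
    (σ : G →* G) (hσ : ∀ g, σ (σ g) = g)
    (H : Subgroup G) (hstab : ∀ h ∈ H, σ h ∈ H)
    (hsqrt : ∀ h ∈ H, σ h = h⁻¹ → ∃ f ∈ H, σ f = f⁻¹ ∧ f ^ 2 = h)
    (g : G) (hg : g⁻¹ * σ g ∈ H) :
    ∃ f ∈ H, σ (g * f) = g * f :=
  coset_contains_sigma_fixed_element_general σ hσ H hsqrt g hg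
end

section
/- Let τ₁, τ₂ be n×n partial permutation matrices with (τ₁;τ₂) of rank n. If there exists a lower-triangular invertible matrix b ∈ Bₙ⁻ such that τ₁ᵀ b τ₂ is symmetric, then τ₁ᵀτ₂ is itself symmetric. -/
/-!
Write `τ₁, τ₂` as the matrices of partial bijections `f, g` from rows to columns. Then `τ₁ᵀ τ₂` is
the matrix of `f.symm.trans g`, and its symmetry means: whenever a row `v` has `f v = a` and
`g v = c`, some row `u` has `f u = c` and `g u = a`.

The `(a, c)` entry of `τ₁ᵀ b τ₂` is `b (f⁻¹ a) (g⁻¹ c)`. For `f v = a`, `g v = c` it is `b v v ≠ 0`,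
so by symmetry the rows `p = f⁻¹ c` and `q = g⁻¹ a` exist and `b p q ≠ 0`, whence `q ≤ p` as `b`
is lower triangular. The rank condition says that every column is hit by `f` or `g`; counting
rows and columns then shows that `P = g.trans f.symm` permutes the set of rows on which both `f`
and `g` are defined. There `p = P v` and `q = P.symm v`, and `P.symm v ≤ P v` forces, after
summing over that set, `P.symm v = P v`: this is `p = q`, the row `u` sought.
-/

open Matrix

open Finset

theorem Option.exists_forall_mem_iff {α : Type*} {p : α → Prop}
    (hp : ∀ a a', p a → p a' → a = a') : ∃ o : Option α, ∀ a, a ∈ o ↔ p a := by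
  by_cases h : ∃ a, p a
  · obtain ⟨a, ha⟩ := h
    exact ⟨some a, fun a' => ⟨fun e => Option.mem_some_iff.1 e ▸ ha,
      fun ha' => Option.mem_some_iff.2 (hp a a' ha ha')⟩⟩
  · exact ⟨none, fun a => ⟨fun e => absurd e (Option.not_mem_none a), fun ha => absurd ⟨a, ha⟩ h⟩⟩

theorem Finset.eq_of_mapsTo_of_injOn_of_le {ι M : Type*} [AddCommMonoid M] [PartialOrder M]
    [IsOrderedCancelAddMonoid M] {s : Finset ι} {p q : ι → ι} (w : ι → M)
    (hp : Set.MapsTo p s s) (hp' : Set.InjOn p s) (hq : Set.MapsTo q s s) (hq' : Set.InjOn q s)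
    (hle : ∀ i ∈ s, w (q i) ≤ w (p i)) : ∀ i ∈ s, w (q i) = w (p i) := by
  have sum_comp : ∀ r : ι → ι, Set.MapsTo r s s → Set.InjOn r s →
      ∑ i ∈ s, w (r i) = ∑ i ∈ s, w i := fun r hr hr' =>
    sum_nbij r hr hr' (surjOn_of_injOn_of_card_le r hr hr' le_rfl) fun _ _ => rfl
  exact (sum_eq_sum_iff_of_le hle).1 (by rw [sum_comp q hq hq', sum_comp p hp hp'])

theorem Matrix.exists_apply_ne_zero_of_rank_eq_card {m n K : Type*} [Field K] [Fintype n]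
    {A : Matrix m n K} (h : A.rank = Fintype.card n) (j : n) : ∃ i, A i j ≠ 0 := by
  have hA : LinearIndependent K A.col :=
    linearIndependent_iff_card_eq_finrank_span.2 (h.symm.trans A.rank_eq_finrank_span_cols)
  by_contra! hj
  exact hA.ne_zero j (funext hj)

theorem Matrix.IsLowerTriangular.apply_self_ne_zero {m K : Type*} [Fintype m] [DecidableEq m]
    [LinearOrder m] [Field K] {b : Matrix m m K} (hb : b.IsLowerTriangular) (hu : IsUnit b)
    (i : m) : b i i ≠ 0 := by
  have hdet := ((isUnit_iff_isUnit_det b).1 hu).ne_zero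
  rw [det_of_isLowerTriangular b hb] at hdet
  exact prod_ne_zero_iff.1 hdet i (mem_univ i)

namespace PEquiv

variable {α β : Type*}

theorem symm_eq_self_of_le_symm {f : α ≃. α} (h : f ≤ f.symm) : f.symm = f :=
  le_antisymm (fun a b hb => f.mem_iff_mem.1 (h b a (f.mem_iff_mem.1 hb))) h

theorem isSome_symm_of_mem {f : α ≃. β} {a : α} {b : β} (h : b ∈ f a) : (f.symm b).isSome :=
  Option.isSome_of_mem (f.mem_iff_mem.2 h)

theorem mem_trans_symm_iff {γ : Type*} (f : α ≃. β) (g : γ ≃. β) (a : γ) (u : α) :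
    u ∈ (g.trans f.symm) a ↔ ∃ c, c ∈ g a ∧ c ∈ f u := by
  simp only [Option.mem_def, trans_eq_some, eq_some_iff]

theorem exists_mem_of_card_le (f : α ≃. β) {s : Finset α} {t : Finset β} (hts : #t ≤ #s)
    (hst : ∀ a ∈ s, ∃ b ∈ t, b ∈ f a) : ∀ b ∈ t, ∃ a ∈ s, b ∈ f a := by
  choose i hit hif using hst
  intro b hb
  obtain ⟨a, ha, rfl⟩ := surj_on_of_inj_on_of_card_le i hit
    (fun a₁ a₂ ha₁ ha₂ h => f.inj (hif a₁ ha₁) (h ▸ hif a₂ ha₂)) hts b hb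
  exact ⟨a, ha, hif a ha⟩

theorem symm_apply_eq_of_le {n : ℕ} (P : Fin n ≃. Fin n) {s : Finset (Fin n)}
    (hP : ∀ v ∈ s, ∃ u ∈ s, u ∈ P v) (hP' : ∀ v ∈ s, ∃ u ∈ s, u ∈ P.symm v)
    (hle : ∀ v ∈ s, ∀ u w, u ∈ P v → w ∈ P.symm v → w ≤ u) : ∀ v ∈ s, P.symm v = P v := by
  have getD_spec : ∀ Q : Fin n ≃. Fin n, (∀ v ∈ s, ∃ u ∈ s, u ∈ Q v) →
      ∀ v ∈ s, (Q v).getD v ∈ s ∧ (Q v).getD v ∈ Q v := by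
    intro Q hQ v hv
    obtain ⟨u, hu, huQ⟩ := hQ v hv
    rw [Option.mem_def.1 huQ]
    exact ⟨hu, rfl⟩
  have getD_injOn : ∀ Q : Fin n ≃. Fin n, (∀ v ∈ s, ∃ u ∈ s, u ∈ Q v) →
      Set.InjOn (fun v => (Q v).getD v) s := fun Q hQ v hv v' hv' h =>
    Q.inj (getD_spec Q hQ v hv).2 (by dsimp only at h; exact h ▸ (getD_spec Q hQ v' hv').2)
  have heq := eq_of_mapsTo_of_injOn_of_le Fin.val
    (fun v hv => (getD_spec P hP v hv).1) (getD_injOn P hP)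
    (fun v hv => (getD_spec _ hP' v hv).1) (getD_injOn _ hP')
    (fun v hv => hle v hv _ _ (getD_spec P hP v hv).2 (getD_spec _ hP' v hv).2)
  intro v hv
  rw [Option.mem_def.1 (getD_spec P hP v hv).2, Option.mem_def.1 (getD_spec _ hP' v hv).2,
    Fin.val_injective (heq v hv)]

section Fintype

variable [Fintype α]

def jointDom (f g : α ≃. β) : Finset α := {a | (f a).isSome ∧ (g a).isSome}

@[simp]
theorem mem_jointDom {f g : α ≃. β} {a : α} : a ∈ jointDom f g ↔ (f a).isSome ∧ (g a).isSome := by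
  simp [jointDom]

theorem mem_jointDom_of_mem {f g : α ≃. β} {v : α} {a c : β} (ha : a ∈ f v) (hc : c ∈ g v) :
    v ∈ jointDom f g :=
  mem_jointDom.2 ⟨Option.isSome_of_mem ha, Option.isSome_of_mem hc⟩

theorem exists_mem_of_mem_jointDom {f g : α ≃. β} {v : α} (hv : v ∈ jointDom f g) :
    ∃ a c, a ∈ f v ∧ c ∈ g v := by
  obtain ⟨⟨a, ha⟩, ⟨c, hc⟩⟩ := Option.isSome_iff_exists.1 (mem_jointDom.1 hv).1,
    Option.isSome_iff_exists.1 (mem_jointDom.1 hv).2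
  exact ⟨a, c, ha, hc⟩

theorem jointDom_comm (f g : α ≃. β) : jointDom f g = jointDom g f := by
  ext
  simp [and_comm]

variable [Fintype β]

theorem card_filter_isSome_symm (f : α ≃. β) :
    #{b | (f.symm b).isSome} = #{a | (f a).isSome} := by
  refine card_bij (fun b hb => (f.symm b).get (by simpa using hb)) (fun b hb => ?_)
    (fun b₁ hb₁ b₂ hb₂ h => ?_) (fun a ha => ?_)
  · simpa using Option.isSome_of_mem (f.mem_iff_mem.1 (Option.get_mem _))
  · have h₁ := f.mem_iff_mem.1 (Option.get_mem (by simpa using hb₁))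
    have h₂ := f.mem_iff_mem.1 (Option.get_mem (by simpa using hb₂))
    rw [h] at h₁
    exact Option.mem_unique h₁ h₂
  · obtain ⟨b, hb⟩ := Option.isSome_iff_exists.1 (by simpa using ha)
    have hab : a ∈ f.symm b := f.mem_iff_mem.2 hb
    exact ⟨b, by simpa using Option.isSome_of_mem hab, Option.get_of_mem _ hab⟩

theorem card_jointDom_symm_le (f g : α ≃. β) (hcard : Fintype.card α ≤ Fintype.card β)
    (hcover : ∀ b, (f.symm b).isSome ∨ (g.symm b).isSome) :
    #(jointDom f.symm g.symm) ≤ #(jointDom f g) := by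
  classical
  have hβ := card_union_add_card_inter {b | (f.symm b).isSome} {b | (g.symm b).isSome}
  have hα := card_union_add_card_inter {a | (f a).isSome} {a | (g a).isSome}
  rw [← filter_or, ← filter_and] at hα hβ
  rw [filter_true_of_mem fun b _ => hcover b, card_univ, card_filter_isSome_symm,
    card_filter_isSome_symm] at hβ
  have := card_le_univ ({a | (f a).isSome ∨ (g a).isSome} : Finset α)
  rw [jointDom, jointDom]
  omega

theorem exists_mem_jointDom_trans_symm (f g : α ≃. β)
    (hcard : Fintype.card α ≤ Fintype.card β)
    (hcover : ∀ b, (f.symm b).isSome ∨ (g.symm b).isSome)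
    (hran : ∀ v a c, a ∈ f v → c ∈ g v → (f.symm c).isSome ∧ (g.symm a).isSome) :
    ∀ v ∈ jointDom f g, ∃ u ∈ jointDom f g, u ∈ (g.trans f.symm) v := by
  have hf : ∀ c ∈ jointDom f.symm g.symm, ∃ u ∈ jointDom f g, c ∈ f u := by
    refine exists_mem_of_card_le f (card_jointDom_symm_le f g hcard hcover) fun v hv => ?_
    obtain ⟨a, c, ha, hc⟩ := exists_mem_of_mem_jointDom hv
    exact ⟨a, mem_jointDom.2 ⟨isSome_symm_of_mem ha, (hran v a c ha hc).2⟩, ha⟩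
  intro v hv
  obtain ⟨a, c, ha, hc⟩ := exists_mem_of_mem_jointDom hv
  obtain ⟨u, hu, hcu⟩ := hf c (mem_jointDom.2 ⟨(hran v a c ha hc).1, isSome_symm_of_mem hc⟩)
  exact ⟨u, hu, (mem_trans_symm_iff f g v u).2 ⟨c, hc, hcu⟩⟩

end Fintype

theorem symm_symm_trans_eq_of_le {n : ℕ} [Fintype β] (f g : Fin n ≃. β)
    (hcard : n ≤ Fintype.card β) (hcover : ∀ c, (f.symm c).isSome ∨ (g.symm c).isSome)
    (hle : ∀ v a c, a ∈ f v → c ∈ g v → ∃ p q, c ∈ f p ∧ a ∈ g q ∧ q ≤ p) :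
    (f.symm.trans g).symm = f.symm.trans g := by
  rw [← Fintype.card_fin n] at hcard
  have hran : ∀ v a c, a ∈ f v → c ∈ g v → (f.symm c).isSome ∧ (g.symm a).isSome := by
    intro v a c ha hc
    obtain ⟨p, q, hp, hq, -⟩ := hle v a c ha hc
    exact ⟨isSome_symm_of_mem hp, isSome_symm_of_mem hq⟩
  set P := g.trans f.symm
  have hP_symm : P.symm = f.trans g.symm := by rw [symm_trans_rev, symm_symm]
  have hP := exists_mem_jointDom_trans_symm f g hcard hcover hran
  have hP' : ∀ v ∈ jointDom f g, ∃ u ∈ jointDom f g, u ∈ P.symm v := by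
    rw [hP_symm, jointDom_comm]
    exact exists_mem_jointDom_trans_symm g f hcard (fun c => (hcover c).symm)
      fun v a c ha hc => (hran v c a hc ha).symm
  have hPle : ∀ v ∈ jointDom f g, ∀ u w, u ∈ P v → w ∈ P.symm v → w ≤ u := by
    rintro v - u w hu hw
    rw [hP_symm] at hw
    obtain ⟨c, hc, hcu⟩ := (mem_trans_symm_iff f g v u).1 hu
    obtain ⟨a, ha, haw⟩ := (mem_trans_symm_iff g f v w).1 hw
    obtain ⟨p, q, hp, hq, hqp⟩ := hle v a c ha hc
    rwa [f.inj hcu hp, g.inj haw hq]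
  have hP_symm_apply := symm_apply_eq_of_le P hP hP' hPle
  refine symm_eq_self_of_le_symm fun a c hac => ?_
  obtain ⟨v, hav, hcv⟩ := (mem_trans _ _ _ _).1 hac
  rw [mem_iff_mem] at hav
  have hv := mem_jointDom_of_mem hav hcv
  obtain ⟨u, -, hu⟩ := hP v hv
  have hu' : u ∈ f.trans g.symm v := by rw [← hP_symm, hP_symm_apply v hv]; exact hu
  obtain ⟨c', hc', hcu⟩ := (mem_trans_symm_iff f g v u).1 hu
  obtain ⟨a', ha', hau⟩ := (mem_trans_symm_iff g f v u).1 hu'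
  rw [Option.mem_unique hc' hcv] at hcu
  rw [Option.mem_unique ha' hav] at hau
  rw [symm_trans_rev, symm_symm]
  exact (mem_trans _ _ _ _).2 ⟨u, g.mem_iff_mem.2 hau, hcu⟩

section Matrix

variable {l m m' n R : Type*}

theorem isSome_symm_or_isSome_symm_of_rank_fromRows {K : Type*} [Field K] [Fintype n]
    [DecidableEq n] {f g : m ≃. n}
    (h : (fromRows (f.toMatrix : Matrix m n K) g.toMatrix).rank = Fintype.card n) (c : n) :
    (f.symm c).isSome ∨ (g.symm c).isSome := by
  obtain ⟨i | i, hi⟩ := exists_apply_ne_zero_of_rank_eq_card h c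
  · rw [fromRows_apply_inl, toMatrix_apply, ite_ne_right_iff] at hi
    exact .inl (isSome_symm_of_mem hi.1)
  · rw [fromRows_apply_inr, toMatrix_apply, ite_ne_right_iff] at hi
    exact .inr (isSome_symm_of_mem hi.1)

variable [Fintype m] [Fintype m'] [DecidableEq m] [DecidableEq n] [NonAssocSemiring R]

theorem toMatrix_mul_mul_toMatrix_apply {f : l ≃. m} {g : m' ≃. n} (M : Matrix m m' R)
    {a : l} {c : n} {v : m} {w : m'} (hv : v ∈ f a) (hc : c ∈ g w) :
    ((f.toMatrix : Matrix l m R) * M * (g.toMatrix : Matrix m' n R)) a c = M v w := by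
  simp only [mul_toMatrix_apply, toMatrix_mul_apply, Option.mem_def.1 hv,
    Option.mem_def.1 (g.mem_iff_mem.2 hc)]

theorem exists_mem_of_toMatrix_mul_mul_toMatrix_apply_ne_zero {f : l ≃. m} {g : m' ≃. n}
    (M : Matrix m m' R) {a : l} {c : n}
    (h : ((f.toMatrix : Matrix l m R) * M * (g.toMatrix : Matrix m' n R)) a c ≠ 0) :
    ∃ v w, v ∈ f a ∧ c ∈ g w ∧
      ((f.toMatrix : Matrix l m R) * M * (g.toMatrix : Matrix m' n R)) a c = M v w := by
  rcases hw : g.symm c with _ | w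
  · simp [mul_toMatrix_apply, hw] at h
  rcases hv : f a with _ | v
  · simp [mul_toMatrix_apply, toMatrix_mul_apply, hv, hw] at h
  exact ⟨v, w, rfl, g.mem_iff_mem.1 hw,
    toMatrix_mul_mul_toMatrix_apply M hv (g.mem_iff_mem.1 hw)⟩

theorem exists_mem_mem_le_of_isSymm [LinearOrder m] {f g : m ≃. n} {b : Matrix m m R}
    (hb : b.IsLowerTriangular) (hdiag : ∀ i, b i i ≠ 0)
    (hsym : ((f.toMatrix : Matrix m n R)ᵀ * b * (g.toMatrix : Matrix m n R)).IsSymm) :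
    ∀ v a c, a ∈ f v → c ∈ g v → ∃ p q, c ∈ f p ∧ a ∈ g q ∧ q ≤ p := by
  intro v a c ha hc
  rw [← toMatrix_symm] at hsym
  have hca := (hsym.apply a c).trans
    (toMatrix_mul_mul_toMatrix_apply b (f.mem_iff_mem.2 ha) hc)
  obtain ⟨p, q, hp, hq, hpq⟩ :=
    exists_mem_of_toMatrix_mul_mul_toMatrix_apply_ne_zero b (hca ▸ hdiag v)
  refine ⟨p, q, f.mem_iff_mem.1 hp, hq, not_lt.1 fun hlt => hdiag v ?_⟩
  rw [← hca, hpq, hb (OrderDual.toDual_lt_toDual.2 hlt)]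

end Matrix

end PEquiv

theorem IsPartialPerm.exists_toMatrix_eq {n : ℕ} {τ : Matrix (Fin n) (Fin n) ℂ}
    (hτ : IsPartialPerm τ) : ∃ f : Fin n ≃. Fin n, f.toMatrix = τ := by
  obtain ⟨h01, hrow, hcol⟩ := hτ
  choose toFun hto using fun v => Option.exists_forall_mem_iff (hrow v)
  choose invFun hinv using fun a => Option.exists_forall_mem_iff fun v v' => hcol v v' a
  refine ⟨⟨toFun, invFun, fun v a => (hinv a v).trans (hto v a).symm⟩, ?_⟩
  ext v a
  rw [PEquiv.toMatrix_apply]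
  rcases h01 v a with h | h <;> simp [hto, h]

theorem symmetric_of_twisted_symmetric {n : ℕ}
    (τ₁ τ₂ : Matrix (Fin n) (Fin n) ℂ)
    (h₁ : IsPartialPerm τ₁) (h₂ : IsPartialPerm τ₂)
    (hrank : (Matrix.fromRows τ₁ τ₂).rank = n)
    (b : Matrix (Fin n) (Fin n) ℂ) (hb : IsUnit b)
    (hlow : ∀ i j : Fin n, i < j → b i j = 0)
    (hsym : (τ₁ᵀ * b * τ₂)ᵀ = τ₁ᵀ * b * τ₂) :
    (τ₁ᵀ * τ₂)ᵀ = τ₁ᵀ * τ₂ := by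
  obtain ⟨f, rfl⟩ := h₁.exists_toMatrix_eq
  obtain ⟨g, rfl⟩ := h₂.exists_toMatrix_eq
  have hb' : b.IsLowerTriangular := fun i j hij => hlow i j hij
  have hcover := PEquiv.isSome_symm_or_isSome_symm_of_rank_fromRows
    (hrank.trans (Fintype.card_fin n).symm)
  have hle := PEquiv.exists_mem_mem_le_of_isSymm hb' (hb'.apply_self_ne_zero hb) hsym
  rw [← PEquiv.toMatrix_symm, ← PEquiv.toMatrix_trans, ← PEquiv.toMatrix_symm,
    PEquiv.symm_symm_trans_eq_of_le f g (by simp) hcover hle]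
end
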